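/- A connected pruned graph G satisfies cat(G) = 2 if and only if G is isomorphic to C_3, P_3, or P_4. -/

import Mathlib

open SimpleGraph

universe u

/-- The cat can move from `u` to `w` in `G`: there is a nontrivial path,
equivalently `w ≠ u` and `w` is reachable from `u`. -/
def CatMove {V : Type u} (G : SimpleGraph V) (u w : V) : Prop :=
  u ≠ w ∧ G.Reachable u w

/-- `CapturedIn G v n` : with the cat on `v` and the herder to cut next,
the herder can guarantee that the cat is isolated after at most `n` edge deletions. -/
inductive CapturedIn {V : Type u} : SimpleGraph V → V → ℕ → Prop
  | isolated {G : SimpleGraph V} {v : V} {n : ℕ} (h : ∀ w, ¬ G.Adj v w) :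
      CapturedIn G v n
  | cut {G : SimpleGraph V} {v : V} {n : ℕ} (e : Sym2 V) (he : e ∈ G.edgeSet)
      (h : ∀ w, CatMove (G.deleteEdges {e}) v w → CapturedIn (G.deleteEdges {e}) w n) :
      CapturedIn G v (n + 1)

/-- The cat number of `G` with the cat starting at `v` (the game value; `⊤` if
the herder cannot guarantee capture within any fixed number of cuts). -/
noncomputable def catVNum {V : Type u} (G : SimpleGraph V) (v : V) : ℕ∞ :=
  sInf (Nat.cast '' {m : ℕ | CapturedIn G v m})

/-- The cat number of `G`: the cat picks the best starting vertex. -/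
noncomputable def catNum {V : Type u} (G : SimpleGraph V) : ℕ∞ :=
  ⨆ v, catVNum G v

/-- The cat, starting at `v`, can evade capture forever: there is a set of safe
positions (remaining graph, cat location), closed under responding to any cut. -/
def CatWinFrom {V : Type u} (G : SimpleGraph V) (v : V) : Prop :=
  ∃ S : Set (SimpleGraph V × V), (G, v) ∈ S ∧
    ∀ p ∈ S, (∃ w, p.1.Adj p.2 w) ∧
      ∀ e ∈ p.1.edgeSet, ∃ w, CatMove (p.1.deleteEdges {e}) p.2 w ∧
        (p.1.deleteEdges {e}, w) ∈ S

/-- `G` is cat-win if the cat can evade capture forever from some starting vertex. -/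
def CatWin {V : Type u} (G : SimpleGraph V) : Prop :=
  ∃ v, CatWinFrom G v

/-- `Evades G v n` : the cat on `v` has a strategy giving a valid response to each
of the next `n` cuts. -/
inductive Evades {V : Type u} : SimpleGraph V → V → ℕ → Prop
  | zero {G : SimpleGraph V} {v : V} : Evades G v 0
  | succ {G : SimpleGraph V} {v : V} {n : ℕ} (move : Sym2 V → V)
      (hmove : ∀ e ∈ G.edgeSet, CatMove (G.deleteEdges {e}) v (move e))
      (h : ∀ e ∈ G.edgeSet, Evades (G.deleteEdges {e}) (move e) n) :
      Evades G v (n + 1)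

/-- `G` is `k`-evadible for every `k`: for each `n` the cat can respond to the
first `n` cuts from a suitable starting vertex. -/
def OmegaEvadible {V : Type u} (G : SimpleGraph V) : Prop :=
  ∀ n : ℕ, ∃ v, Evades G v n

/-- The infinite complete binary tree on binary strings. -/
def binTree : SimpleGraph (List Bool) :=
  SimpleGraph.fromRel (fun a b => ∃ t : Bool, b = a ++ [t])

/-- `H` is a minor of `G` : disjoint connected branch sets, one per vertex of `H`,
with an edge of `G` between branch sets for every edge of `H`. -/
def IsMinor {W : Type*} {V : Type u} (H : SimpleGraph W) (G : SimpleGraph V) : Prop :=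
  ∃ B : W → Set V,
    (∀ w, (G.induce (B w)).Connected) ∧
    (Pairwise fun w₁ w₂ => Disjoint (B w₁) (B w₂)) ∧
    (∀ w₁ w₂, H.Adj w₁ w₂ → ∃ x ∈ B w₁, ∃ y ∈ B w₂, G.Adj x y)

/-- Every pair of distinct vertices is joined by two edge-disjoint (finite) paths. -/
def TwoEdgeConnected {V : Type u} (G : SimpleGraph V) : Prop :=
  ∀ u v : V, u ≠ v → ∃ (p q : G.Walk u v), p.IsPath ∧ q.IsPath ∧
    ∀ e ∈ p.edges, e ∉ q.edges

/-- `x` has degree exactly 1 in `G`. -/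
def DegOne {V : Type u} (G : SimpleGraph V) (x : V) : Prop :=
  ∃ a, G.neighborSet x = {a}

/-- `x` has degree exactly 2 in `G`. -/
def DegTwo {V : Type u} (G : SimpleGraph V) (x : V) : Prop :=
  ∃ a b, a ≠ b ∧ G.neighborSet x = {a, b}

/-- `x` has degree exactly 3 in `G`. -/
def DegThree {V : Type u} (G : SimpleGraph V) (x : V) : Prop :=
  ∃ a b c, a ≠ b ∧ a ≠ c ∧ b ≠ c ∧ G.neighborSet x = {a, b, c}

/-- `x` has degree at least `k` in `G`. -/
def DegGe {V : Type u} (G : SimpleGraph V) (x : V) (k : ℕ) : Prop :=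
  ∃ s : Finset V, s.card = k ∧ ∀ a ∈ s, G.Adj x a

/-- A connected graph is pruned: no vertex of degree at least 3 has two pendant leaves. -/
def Pruned {V : Type u} (G : SimpleGraph V) : Prop :=
  G.Connected ∧ ¬ ∃ x y z : V, x ≠ z ∧ G.Adj y x ∧ G.Adj y z ∧
    DegOne G x ∧ DegOne G z ∧ DegGe G y 3

/-!
`cat(G) = 2` says that the cat is captured within two cuts from every start, while some vertex
`v` has two neighbours. The herder's first cut against a cat on `v` must leave the cat, wherever
it moves, on a vertex of degree at most one, so every neighbour of `v` off the cut edge is a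
pendant leaf of `v`. Either the cut edge closes a triangle at `v`, or all neighbours of `v` but
one, `c`, are pendant; pruning then leaves `v` with exactly one pendant leaf `ℓ` besides `c`.
In the second case the first cut against a cat on `c` must touch `v`, which forces every further
neighbour of `c` to be a pendant leaf of `c`; pruning allows at most one, so `G` is `P₃` or `P₄`.
In the triangle case the first cut against a cat on a triangle vertex leaves it a way to a vertex
of degree two unless the triangle is all of `G`, so `G` is `C₃`.
-/

namespace SimpleGraph

variable {V : Type u} {G : SimpleGraph V} {e : Sym2 V} {x y z x₀ x₁ x₂ x₃ : V}

lemma deleteEdges_singleton_adj_of_ne (h : G.Adj x y) (hne : s(x, y) ≠ e) :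
    (G.deleteEdges {e}).Adj x y :=
  deleteEdges_adj.2 ⟨h, hne⟩

lemma deleteEdges_singleton_adj_of_mem (h : G.Adj x y) (hz : z ∈ e) (hx : x ≠ z) (hy : y ≠ z) :
    (G.deleteEdges {e}).Adj x y :=
  deleteEdges_singleton_adj_of_ne h fun hxy => by
    rw [← hxy, Sym2.mem_iff] at hz
    exact hz.elim (fun h => hx h.symm) fun h => hy h.symm

lemma nonempty_iso_of_neighbors_mem {W : Type*} [Nonempty W] {H : SimpleGraph W}
    (hG : G.Preconnected) (f : W → V) (hf : Function.Injective f)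
    (hadj : ∀ i j, H.Adj i j → G.Adj (f i) (f j))
    (hnbr : ∀ i x, G.Adj (f i) x → ∃ j, H.Adj i j ∧ f j = x) : Nonempty (G ≃g H) := by
  have hrange : ∀ {x y : V}, G.Walk x y → x ∈ Set.range f → y ∈ Set.range f := by
    intro x y p
    induction p with
    | nil => exact id
    | cons h _ ih =>
      rintro ⟨i, rfl⟩
      obtain ⟨j, -, rfl⟩ := hnbr i _ h
      exact ih ⟨j, rfl⟩
  have hsurj : Function.Surjective f := fun x =>
    (hG (f (Classical.arbitrary W)) x).elim fun p => hrange p ⟨_, rfl⟩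
  refine ⟨RelIso.symm ⟨Equiv.ofBijective f ⟨hf, hsurj⟩, fun {i j} => ⟨fun h => ?_, hadj i j⟩⟩⟩
  obtain ⟨k, hk, hkj⟩ := hnbr i (f j) h
  exact hf hkj ▸ hk

lemma nonempty_iso_pathGraph_three (hG : G.Preconnected) (h₀₂ : x₀ ≠ x₂)
    (h₀ : ∀ y, G.Adj x₀ y ↔ y = x₁) (h₁ : ∀ y, G.Adj x₁ y ↔ y = x₀ ∨ y = x₂)
    (h₂ : ∀ y, G.Adj x₂ y ↔ y = x₁) : Nonempty (G ≃g pathGraph 3) := by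
  have h₀₁ := ((h₀ x₁).2 rfl).ne
  have h₁₂ := ((h₁ x₂).2 (.inr rfl)).ne
  refine nonempty_iso_of_neighbors_mem hG ![x₀, x₁, x₂] ?_ ?_ ?_
  · simp [Function.Injective, Fin.forall_fin_succ, h₀₁, h₀₁.symm, h₀₂, h₀₂.symm, h₁₂, h₁₂.symm]
  · intro i j h
    fin_cases i <;> fin_cases j <;> simp [pathGraph_adj, h₀, h₁, h₂] at h ⊢
  · intro i x hx
    fin_cases i <;> simp [h₀, h₁, h₂] at hx <;> rcases hx with rfl | rfl <;>
      simp [Fin.exists_fin_succ, pathGraph_adj]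

lemma nonempty_iso_pathGraph_four (hG : G.Preconnected) (h₀₂ : x₀ ≠ x₂) (h₁₃ : x₁ ≠ x₃)
    (h₀ : ∀ y, G.Adj x₀ y ↔ y = x₁) (h₁ : ∀ y, G.Adj x₁ y ↔ y = x₀ ∨ y = x₂)
    (h₂ : ∀ y, G.Adj x₂ y ↔ y = x₁ ∨ y = x₃) (h₃ : ∀ y, G.Adj x₃ y ↔ y = x₂) :
    Nonempty (G ≃g pathGraph 4) := by
  have h₀₁ := ((h₀ x₁).2 rfl).ne
  have h₁₂ := ((h₁ x₂).2 (.inr rfl)).ne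
  have h₂₃ := ((h₃ x₂).2 rfl).ne'
  have h₀₃ : x₀ ≠ x₃ := fun h => h₁₂ ((h₀ x₂).1 (h ▸ (h₃ x₂).2 rfl)).symm
  refine nonempty_iso_of_neighbors_mem hG ![x₀, x₁, x₂, x₃] ?_ ?_ ?_
  · simp [Function.Injective, Fin.forall_fin_succ, h₀₁, h₀₁.symm, h₀₂, h₀₂.symm, h₀₃, h₀₃.symm,
      h₁₂, h₁₂.symm, h₁₃, h₁₃.symm, h₂₃, h₂₃.symm]
  · intro i j h
    fin_cases i <;> fin_cases j <;> simp [pathGraph_adj, h₀, h₁, h₂, h₃] at h ⊢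
  · intro i x hx
    fin_cases i <;> simp [h₀, h₁, h₂, h₃] at hx <;> rcases hx with rfl | rfl <;>
      simp [Fin.exists_fin_succ, pathGraph_adj]

lemma nonempty_iso_cycleGraph_three (hG : G.Preconnected)
    (h₀ : ∀ y, G.Adj x₀ y ↔ y = x₁ ∨ y = x₂) (h₁ : ∀ y, G.Adj x₁ y ↔ y = x₀ ∨ y = x₂)
    (h₂ : ∀ y, G.Adj x₂ y ↔ y = x₀ ∨ y = x₁) : Nonempty (G ≃g cycleGraph 3) := by
  have h₀₁ := ((h₀ x₁).2 (.inl rfl)).ne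
  have h₀₂ := ((h₀ x₂).2 (.inr rfl)).ne
  have h₁₂ := ((h₁ x₂).2 (.inr rfl)).ne
  rw [cycleGraph_three_eq_top]
  refine nonempty_iso_of_neighbors_mem hG ![x₀, x₁, x₂] ?_ ?_ ?_
  · simp [Function.Injective, Fin.forall_fin_succ, h₀₁, h₀₁.symm, h₀₂, h₀₂.symm, h₁₂, h₁₂.symm]
  · intro i j h
    fin_cases i <;> fin_cases j <;> simp [h₀, h₁, h₂] at h ⊢
  · intro i x hx
    fin_cases i <;> simp [h₀, h₁, h₂] at hx <;> rcases hx with rfl | rfl <;>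
      simp [Fin.exists_fin_succ]

end SimpleGraph

open SimpleGraph

section Game

variable {V : Type u} {G : SimpleGraph V} {m n : ℕ} {v w : V}

lemma CatMove.map {W : Type*} {G' : SimpleGraph W} (f : G ≃g G') (h : CatMove G v w) :
    CatMove G' (f v) (f w) :=
  ⟨f.injective.ne h.1, h.2.map f.toHom⟩

lemma not_catMove_of_forall_not_adj (hv : ∀ x, ¬ G.Adj v x) : ¬ CatMove G v w := by
  rintro ⟨hne, ⟨p⟩⟩
  cases p with
  | nil => exact hne rfl
  | cons h _ => exact hv _ h

lemma CapturedIn.mono (h : CapturedIn G v m) (hmn : m ≤ n) : CapturedIn G v n := by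
  induction h generalizing n with
  | isolated h => exact .isolated h
  | cut e he _ ih =>
    obtain ⟨k, rfl⟩ : ∃ k, n = k + 1 := ⟨n - 1, by omega⟩
    exact .cut e he fun w hw => ih w hw (by omega)

lemma capturedIn_zero_iff : CapturedIn G v 0 ↔ ∀ x, ¬ G.Adj v x :=
  ⟨fun | .isolated h => h, .isolated⟩

lemma capturedIn_one_iff : CapturedIn G v 1 ↔ ∀ x y, G.Adj v x → G.Adj v y → x = y := by
  constructor
  · rintro (h | ⟨e, -, h⟩)
    · exact fun x _ hx => absurd hx (h x)
    · have hcut : ∀ x, G.Adj v x → s(v, x) = e := fun x hx => by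
        by_contra hne
        have hvx := deleteEdges_singleton_adj_of_ne hx hne
        exact capturedIn_zero_iff.1 (h x ⟨hvx.ne, hvx.reachable⟩) v hvx.symm
      exact fun x y hx hy => Sym2.congr_right.1 ((hcut x hx).trans (hcut y hy).symm)
  · intro h
    by_cases hv : ∃ x, G.Adj v x
    · obtain ⟨x, hx⟩ := hv
      refine .cut s(v, x) hx fun w hw => (not_catMove_of_forall_not_adj (fun y hy => ?_) hw).elim
      rw [deleteEdges_adj, h x y hx hy.1] at hy
      exact hy.2 rfl
    · exact .isolated fun x hx => hv ⟨x, hx⟩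

lemma CapturedIn.map {W : Type*} {G' : SimpleGraph W} (h : CapturedIn G v n)
    (f : G ≃g G') : CapturedIn G' (f v) n := by
  induction h generalizing W with
  | isolated h => exact .isolated fun x hx => h _ (f.map_rel_iff.1 (f.apply_symm_apply x ▸ hx))
  | @cut G v n e he _ ih =>
    let f' : G.deleteEdges {e} ≃g G'.deleteEdges {e.map f} :=
      { f.toEquiv with
        map_rel_iff' := by
          intro a b
          simp [← Sym2.map_mk, (Sym2.map.injective f.injective).eq_iff, f.map_adj_iff] }
    refine .cut (e.map f) (f.map_mem_edgeSet_iff.2 he) fun w hw => ?_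
    have hw' : CatMove _ (f' v) w := hw
    replace hw' := hw'.map f'.symm
    rw [f'.symm_apply_apply] at hw'
    simpa using ih _ hw' f'

lemma catVNum_le_iff : catVNum G v ≤ n ↔ CapturedIn G v n := by
  refine ⟨fun h => ?_, fun h => sInf_le ⟨n, h, rfl⟩⟩
  have hne : (Nat.cast '' {m | CapturedIn G v m} : Set ℕ∞).Nonempty := by
    by_contra hempty
    simp [catVNum, Set.not_nonempty_iff_eq_empty.1 hempty] at h
  obtain ⟨m, hm, hmv⟩ := csInf_mem hne
  exact hm.mono (by exact_mod_cast hmv.trans_le h)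

lemma catNum_le_iff : catNum G ≤ n ↔ ∀ v, CapturedIn G v n := by
  simp only [catNum, iSup_le_iff, catVNum_le_iff]

lemma catNum_congr {W : Type*} {G' : SimpleGraph W} (f : G ≃g G') : catNum G = catNum G' := by
  have hv : ∀ v, catVNum G v = catVNum G' (f v) := fun v => by
    refine congrArg sInf (congrArg _ (Set.ext fun n => ⟨fun h => h.map f, fun h => ?_⟩))
    simpa using h.map f.symm
  simp only [catNum, hv]
  exact f.toEquiv.iSup_comp (g := catVNum G')

lemma catNum_eq_two_iff :
    catNum G = 2 ↔ (∀ v, CapturedIn G v 2) ∧ ∃ v x y, G.Adj v x ∧ G.Adj v y ∧ x ≠ y := by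
  have htwo : ∀ k : ℕ∞, k = 2 ↔ k ≤ (2 : ℕ) ∧ ¬ k ≤ (1 : ℕ) := fun k => by
    induction k using ENat.recTopCoe with
    | top => simp
    | coe k => norm_cast; omega
  simp only [htwo, catNum_le_iff, capturedIn_one_iff]
  push Not
  rfl

end Game

section Concrete

lemma capturedIn_two_of_forall {V : Type u} {G : SimpleGraph V} {v a b : V} (hab : G.Adj a b)
    (h : ∀ w, v ≠ w → ∀ x y, (G.deleteEdges {s(a, b)}).Adj w x →
      (G.deleteEdges {s(a, b)}).Adj w y → x = y) :
    CapturedIn G v 2 :=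
  .cut s(a, b) hab fun w hw => capturedIn_one_iff.2 (h w hw.1)

lemma catNum_pathGraph_three : catNum (pathGraph 3) = 2 := by
  refine catNum_eq_two_iff.2 ⟨fun v => capturedIn_two_of_forall (a := 1) (b := 2)
    (by simp [pathGraph_adj]) ?_, 1, 0, 2, by simp [pathGraph_adj], by simp [pathGraph_adj],
    by decide⟩
  simp only [deleteEdges_adj, Set.mem_singleton_iff, pathGraph_adj]
  revert v
  decide

lemma catNum_pathGraph_four : catNum (pathGraph 4) = 2 := by
  refine catNum_eq_two_iff.2 ⟨fun v => capturedIn_two_of_forall (a := 1) (b := 2)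
    (by simp [pathGraph_adj]) ?_, 1, 0, 2, by simp [pathGraph_adj], by simp [pathGraph_adj],
    by decide⟩
  simp only [deleteEdges_adj, Set.mem_singleton_iff, pathGraph_adj]
  revert v
  decide

lemma catNum_cycleGraph_three : catNum (cycleGraph 3) = 2 := by
  refine catNum_eq_two_iff.2 ⟨fun v => capturedIn_two_of_forall (a := v + 1) (b := v + 2)
    (by revert v; decide) ?_, 0, 1, 2, by decide, by decide, by decide⟩
  simp only [deleteEdges_adj, Set.mem_singleton_iff]
  revert v
  decide

end Concrete

section Structure

variable {V : Type u} {G : SimpleGraph V} {e : Sym2 V} {c v w x y z : V}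

/-- The herder's first cut in a capture within two cuts. -/
def IsCaptureCut (G : SimpleGraph V) (v : V) (e : Sym2 V) : Prop :=
  ∀ w, CatMove (G.deleteEdges {e}) v w →
    ∀ x y, (G.deleteEdges {e}).Adj w x → (G.deleteEdges {e}).Adj w y → x = y

lemma CapturedIn.exists_isCaptureCut (h : CapturedIn G v 2) (hv : G.Adj v w) :
    ∃ e ∈ G.edgeSet, IsCaptureCut G v e := by
  rcases h with h | ⟨e, he, h⟩
  · exact absurd hv (h w)
  · exact ⟨e, he, fun w hw => capturedIn_one_iff.1 (h w hw)⟩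

lemma IsCaptureCut.eq_of_adj (h : IsCaptureCut G v e) (hvw : (G.deleteEdges {e}).Adj v w)
    (hx : (G.deleteEdges {e}).Adj w x) (hy : (G.deleteEdges {e}).Adj w y) : x = y :=
  h w ⟨hvw.ne, hvw.reachable⟩ x y hx hy

lemma IsCaptureCut.eq_or_eq_of_adj (h : IsCaptureCut G v e) (hvw : G.Adj v w)
    (hvwe : s(v, w) ≠ e) (hwx : G.Adj w x) : x = v ∨ s(w, x) = e := by
  by_cases hwxe : s(w, x) = e
  · exact .inr hwxe
  · have hvw' := deleteEdges_singleton_adj_of_ne hvw hvwe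
    exact .inl (h.eq_of_adj hvw' (deleteEdges_singleton_adj_of_ne hwx hwxe) hvw'.symm)

lemma IsCaptureCut.eq_of_notMem (h : IsCaptureCut G v e) (hvw : G.Adj v w) (hw : w ∉ e)
    (hwx : G.Adj w x) : x = v :=
  (h.eq_or_eq_of_adj hvw (fun hvwe => hw (hvwe ▸ Sym2.mem_mk_right v w)) hwx).resolve_right
    fun hwxe => hw (hwxe ▸ Sym2.mem_mk_left w x)

lemma IsCaptureCut.eq_of_mem (h : IsCaptureCut G v e) (hz : z ∈ e) (hvw : G.Adj v w)
    (hvz : v ≠ z) (hwz : w ≠ z) (hwx : G.Adj w x) (hxz : x ≠ z) : x = v :=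
  h.eq_of_adj (deleteEdges_singleton_adj_of_mem hvw hz hvz hwz)
    (deleteEdges_singleton_adj_of_mem hwx hz hwz hxz)
    (deleteEdges_singleton_adj_of_mem hvw.symm hz hwz hvz)

lemma Pruned.eq_of_pendant (hp : Pruned G) (hx : G.Adj v x) (hy : G.Adj v y)
    (hxv : ∀ w, G.Adj x w → w = v) (hyv : ∀ w, G.Adj y w → w = v) (hc : G.Adj v c)
    (hcx : c ≠ x) (hcy : c ≠ y) : x = y := by
  classical
  by_contra hxy
  refine hp.2 ⟨x, v, y, hxy, hx, hy, ⟨v, ?_⟩, ⟨v, ?_⟩, {x, y, c}, ?_, ?_⟩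
  · exact Set.ext fun w => ⟨hxv w, by rintro rfl; exact hx.symm⟩
  · exact Set.ext fun w => ⟨hyv w, by rintro rfl; exact hy.symm⟩
  · exact Finset.card_eq_three.2 ⟨x, y, c, hxy, hcx.symm, hcy.symm, rfl⟩
  · simp [hx, hy, hc]

end Structure

section Classification

variable {V : Type u} {G : SimpleGraph V} {a b c v p q : V}

lemma nonempty_iso_pathGraph_of_pendant_except (hp : Pruned G) (hcap : ∀ v, CapturedIn G v 2)
    (hvp : G.Adj v p) (hvq : G.Adj v q) (hpq : p ≠ q)
    (hpend : ∀ n, G.Adj v n → n ≠ c → ∀ x, G.Adj n x → x = v) :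
    Nonempty (G ≃g pathGraph 3) ∨ Nonempty (G ≃g pathGraph 4) := by
  wlog hvc : G.Adj v c generalizing c
  · exact this (c := p) (fun n hn hnp => hpend n hn fun hnc => hvc (hnc ▸ hn)) hvp
  obtain ⟨ℓ, hvℓ, hℓc⟩ : ∃ ℓ, G.Adj v ℓ ∧ ℓ ≠ c := by
    by_cases hpc : p = c
    · exact ⟨q, hvq, fun hqc => hpq (hpc.trans hqc.symm)⟩
    · exact ⟨p, hvp, hpc⟩
  have hℓv := hpend ℓ hvℓ hℓc
  have hv_nbr : ∀ n, G.Adj v n → n = ℓ ∨ n = c := fun n hvn => by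
    by_contra! hn
    exact hn.1 (hp.eq_of_pendant hvn hvℓ (hpend n hvn hn.2) hℓv hvc hn.2.symm hℓc.symm)
  obtain ⟨e, -, he⟩ := (hcap c).exists_isCaptureCut hvc.symm
  -- Otherwise the cat escapes from `c` to `v`, which keeps its two neighbours `ℓ` and `c`.
  have hve : v ∈ e := by
    by_contra hve
    exact hℓc (he.eq_of_notMem hvc.symm hve hvℓ)
  have hcv : c ≠ v := hvc.ne'
  have hc_pend : ∀ m, G.Adj c m → m ≠ v → ∀ x, G.Adj m x → x = c := by
    refine fun m hcm hmv x hmx => he.eq_of_mem hve hcm hcv hmv hmx ?_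
    rintro rfl
    rcases hv_nbr m hmx.symm with rfl | rfl
    · exact hcv (hℓv c hcm.symm)
    · exact hcm.ne rfl
  have hc_nbr : ∀ m m', G.Adj c m → m ≠ v → G.Adj c m' → m' ≠ v → m = m' :=
    fun m m' hm hmv hm' hm'v =>
      hp.eq_of_pendant hm hm' (hc_pend m hm hmv) (hc_pend m' hm' hm'v) hvc.symm hmv.symm hm'v.symm
  have hℓ_nbr : ∀ y, G.Adj ℓ y ↔ y = v := fun y => ⟨hℓv y, by rintro rfl; exact hvℓ.symm⟩
  have hv_nbr' : ∀ y, G.Adj v y ↔ y = ℓ ∨ y = c :=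
    fun y => ⟨hv_nbr y, by rintro (rfl | rfl); exacts [hvℓ, hvc]⟩
  by_cases hm : ∃ m, G.Adj c m ∧ m ≠ v
  · obtain ⟨m, hcm, hmv⟩ := hm
    refine .inr (nonempty_iso_pathGraph_four hp.1.preconnected hℓc hmv.symm hℓ_nbr hv_nbr'
      (fun y => ⟨fun hcy => or_iff_not_imp_left.2 fun hyv => hc_nbr y m hcy hyv hcm hmv, ?_⟩)
      (fun y => ⟨hc_pend m hcm hmv y, by rintro rfl; exact hcm.symm⟩))
    rintro (rfl | rfl)
    exacts [hvc.symm, hcm]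
  · push Not at hm
    exact .inl (nonempty_iso_pathGraph_three hp.1.preconnected hℓc hℓ_nbr hv_nbr'
      fun y => ⟨hm y, by rintro rfl; exact hvc.symm⟩)

lemma nonempty_iso_cycleGraph_of_isCaptureCut (hG : G.Preconnected) (hcap : ∀ v, CapturedIn G v 2)
    (he : IsCaptureCut G v s(a, b)) (hva : G.Adj v a) (hvb : G.Adj v b) (hab : G.Adj a b) :
    Nonempty (G ≃g cycleGraph 3) := by
  have hva_e : s(v, a) ≠ s(a, b) := by simp [hva.ne, hvb.ne]
  have hvb_e : s(v, b) ≠ s(a, b) := by simp [hva.ne, hvb.ne]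
  have ha_nbr : ∀ x, G.Adj a x → x = v ∨ x = b := fun x hx =>
    (he.eq_or_eq_of_adj hva hva_e hx).imp_right Sym2.congr_right.1
  have hb_nbr : ∀ x, G.Adj b x → x = v ∨ x = a := fun x hx =>
    (he.eq_or_eq_of_adj hvb hvb_e hx).imp_right fun h => Sym2.congr_right.1 (h.trans Sym2.eq_swap)
  have hv_nbr : ∀ x, G.Adj v x → x = a ∨ x = b := by
    intro m hvm
    by_contra! hm
    obtain ⟨e, -, hae⟩ := (hcap a).exists_isCaptureCut hab
    by_cases hav : s(a, v) = e
    · -- the cat escapes from `a` to `b`, which keeps its neighbours `a` and `v`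
      subst hav
      have hv : v ∈ s(a, v) := Sym2.mem_mk_right a v
      exact hva.ne (hae.eq_of_adj (deleteEdges_singleton_adj_of_mem hab hv hva.ne' hvb.ne')
        (deleteEdges_singleton_adj_of_mem hvb.symm (Sym2.mem_mk_left a v) hab.ne' hva.ne)
        (deleteEdges_singleton_adj_of_mem hab.symm hv hvb.ne' hva.ne'))
    · -- the cat escapes from `a` to `v`, which keeps two of its neighbours `a`, `b`, `m`
      have hav' := deleteEdges_singleton_adj_of_ne hva.symm hav
      by_cases hvb' : s(v, b) = e
      · refine hm.1 (hae.eq_of_adj hav' hav'.symm (deleteEdges_singleton_adj_of_ne hvm ?_)).symm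
        rw [← hvb']
        exact fun h => hm.2 (Sym2.congr_right.1 h)
      · exact hab.ne (hae.eq_of_adj hav' hav'.symm (deleteEdges_singleton_adj_of_ne hvb hvb'))
  exact nonempty_iso_cycleGraph_three hG
    (fun y => ⟨hv_nbr y, by rintro (rfl | rfl); exacts [hva, hvb]⟩)
    (fun y => ⟨ha_nbr y, by rintro (rfl | rfl); exacts [hva.symm, hab]⟩)
    (fun y => ⟨hb_nbr y, by rintro (rfl | rfl); exacts [hvb.symm, hab.symm]⟩)

lemma nonempty_iso_of_capturedIn_two (hp : Pruned G) (hcap : ∀ v, CapturedIn G v 2)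
    (hvp : G.Adj v p) (hvq : G.Adj v q) (hpq : p ≠ q) :
    Nonempty (G ≃g cycleGraph 3) ∨ Nonempty (G ≃g pathGraph 3) ∨
      Nonempty (G ≃g pathGraph 4) := by
  obtain ⟨e, he, hcut⟩ := (hcap v).exists_isCaptureCut hvp
  induction e using Sym2.ind with | h a b => ?_
  have hpend : ∀ n, G.Adj v n → n ≠ a → n ≠ b → ∀ x, G.Adj n x → x = v :=
    fun n hvn hna hnb _ => hcut.eq_of_notMem hvn (by simp [hna, hnb])
  by_cases htri : G.Adj v a ∧ G.Adj v b
  · exact .inl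
      (nonempty_iso_cycleGraph_of_isCaptureCut hp.1.preconnected hcap hcut htri.1 htri.2 he)
  · refine .inr ?_
    rcases not_and_or.1 htri with hva | hvb
    · exact nonempty_iso_pathGraph_of_pendant_except hp hcap hvp hvq hpq (c := b) fun n hvn =>
        hpend n hvn fun hna => hva (hna ▸ hvn)
    · exact nonempty_iso_pathGraph_of_pendant_except hp hcap hvp hvq hpq (c := a) fun n hvn hna =>
        hpend n hvn hna fun hnb => hvb (hnb ▸ hvn)

end Classification

/-- a connected pruned graph has cat number 2 iff it is `C₃`, `P₃` or `P₄`. -/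
theorem pruned_catNum_two_iff {V : Type u} (G : SimpleGraph V) (hp : Pruned G) :
    catNum G = 2 ↔
      Nonempty (G ≃g SimpleGraph.cycleGraph 3) ∨
      Nonempty (G ≃g SimpleGraph.pathGraph 3) ∨
      Nonempty (G ≃g SimpleGraph.pathGraph 4) := by
  constructor
  · rw [catNum_eq_two_iff]
    rintro ⟨hcap, v, p, q, hvp, hvq, hpq⟩
    exact nonempty_iso_of_capturedIn_two hp hcap hvp hvq hpq
  · rintro (h | h | h) <;> obtain ⟨f⟩ := h <;> rw [catNum_congr f]
    exacts [catNum_cycleGraph_three, catNum_pathGraph_three, catNum_pathGraph_four]
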